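/- Let G be a graph that is both 5-connected and contraction critical quasi 5-connected, and let A be a nontrivial atom of G (a nontrivial fragment of minimum cardinality). Then |A| ≤ 3. -/

import Mathlib

open SimpleGraph Set

variable {V : Type*}

/-- `G` is `k`-connected: more than `k` vertices and removing fewer than `k`
vertices leaves a connected graph. -/
def IsKConnected (k : ℕ) [Fintype V] (G : SimpleGraph V) : Prop :=
  k + 1 ≤ Fintype.card V ∧
    ∀ S : Set V, S.ncard < k → (G.induce Sᶜ).Connected

/-- Contraction of the edge `xy`: identify `y` with `x`, simplifying multiple edges. -/
def contractE [DecidableEq V] (G : SimpleGraph V) (x y : V) :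
    SimpleGraph {v : V // v ≠ y} :=
  SimpleGraph.fromRel (fun a b =>
    G.Adj a.1 b.1 ∨ (a.1 = x ∧ G.Adj y b.1) ∨ (b.1 = x ∧ G.Adj y a.1))

/-- The (outer) neighborhood of a vertex set `A`. -/
def gBoundary (G : SimpleGraph V) (A : Set V) : Set V :=
  {v | v ∉ A ∧ ∃ a ∈ A, G.Adj v a}

/-- `S` separates `G`: the rest of the graph splits into two nonempty parts
with no edges between them. -/
def Separates (G : SimpleGraph V) (S : Set V) : Prop :=
  ∃ A B : Set V, A.Nonempty ∧ B.Nonempty ∧ Disjoint A B ∧ A ∪ B = Sᶜ ∧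
    ∀ a ∈ A, ∀ b ∈ B, ¬ G.Adj a b

/-- `T` is a nontrivial 4-cut: `|T| = 4` and `G - T` splits into two parts,
each of size at least 2, with no edges between them. -/
def IsNontrivialFourCut (G : SimpleGraph V) (T : Set V) : Prop :=
  T.ncard = 4 ∧ ∃ A B : Set V, 2 ≤ A.ncard ∧ 2 ≤ B.ncard ∧ Disjoint A B ∧
    A ∪ B = Tᶜ ∧ ∀ a ∈ A, ∀ b ∈ B, ¬ G.Adj a b

/-- `G` is quasi 5-connected: 4-connected without a nontrivial 4-cut. -/
def QuasiFiveConnected [Fintype V] (G : SimpleGraph V) : Prop :=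
  IsKConnected 4 G ∧ ∀ T : Set V, ¬ IsNontrivialFourCut G T

/-- `G` is contraction critical quasi 5-connected. -/
def ContractionCriticalQuasiFive [Fintype V] [DecidableEq V] (G : SimpleGraph V) : Prop :=
  QuasiFiveConnected G ∧
    ∀ x y : V, G.Adj x y → ¬ QuasiFiveConnected (contractE G x y)

/-- `A` is a fragment of `G`: both `A` and its "far side" are nonempty and the
neighborhood of `A` is a smallest separating set. -/
def IsFragment (G : SimpleGraph V) (A : Set V) : Prop :=
  A.Nonempty ∧ (Aᶜ \ gBoundary G A).Nonempty ∧
    ∀ S : Set V, Separates G S → (gBoundary G A).ncard ≤ S.ncard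

/-- A nontrivial fragment: both sides have at least two vertices. -/
def IsNontrivialFragment (G : SimpleGraph V) (A : Set V) : Prop :=
  IsFragment G A ∧ 2 ≤ A.ncard ∧ 2 ≤ (Aᶜ \ gBoundary G A).ncard

/-- Degree sum at least 9 for every pair of vertices at distance one or two. -/
def DegSumNine (G : SimpleGraph V) : Prop :=
  ∀ u v : V, (G.dist u v = 1 ∨ G.dist u v = 2) →
    9 ≤ (G.neighborSet u).ncard + (G.neighborSet v).ncard

/-!
Suppose the atom `A` has at least four vertices. Contracting an edge `xy` creates a nontrivial
4-cut, which lifts to a 5-separator `S ∋ x, y` of `G` whose two sides are nontrivial fragments,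
hence no smaller than `A`. Crossing `S` with `N(A)` splits `V` into nine cells; a fragment
argument on each corner together with the minimality of `A` pins down the cell sizes whenever
`A` meets `S`: `|A ∩ S| = 2`, `A` has exactly one vertex on each side of `S`, and these two
vertices are adjacent to all of `A ∩ S`.

`A` contains an edge `xy`, since otherwise deleting a vertex of `A` would leave a smaller
nontrivial fragment. Let `w, w'` be the vertices of `A` off the separator `S ∋ x, y`; both are
adjacent to `x` and `y`. A separator through the edge `xw` meets `A` in `{x, w}`, so `y` and `w'`
lie on opposite sides of it, contradicting `y ~ w'`.
-/

def farSide (G : SimpleGraph V) (A : Set V) : Set V :=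
  Aᶜ \ gBoundary G A

structure IsSeparation (G : SimpleGraph V) (S B B' : Set V) : Prop where
  nonempty_left : B.Nonempty
  nonempty_right : B'.Nonempty
  disjoint : Disjoint B B'
  union_eq : B ∪ B' = Sᶜ
  not_adj : ∀ a ∈ B, ∀ b ∈ B', ¬ G.Adj a b

def IsNontrivialAtom (G : SimpleGraph V) (A : Set V) : Prop :=
  IsNontrivialFragment G A ∧ ∀ B : Set V, IsNontrivialFragment G B → A.ncard ≤ B.ncard

section Boundary

variable {G : SimpleGraph V} {A X X' Y Y' S T B B' : Set V}

lemma gBoundary_inter_subset (X Y : Set V) :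
    gBoundary G (X ∩ Y) ⊆
      (X ∩ gBoundary G Y) ∪ (gBoundary G X ∩ Y) ∪ (gBoundary G X ∩ gBoundary G Y) := by
  rintro v ⟨hv, u, ⟨huX, huY⟩, hvu⟩
  by_cases hX : v ∈ X <;> by_cases hY : v ∈ Y
  · exact absurd ⟨hX, hY⟩ hv
  · exact Or.inl (Or.inl ⟨hX, hY, u, huY, hvu⟩)
  · exact Or.inl (Or.inr ⟨⟨hX, u, huX, hvu⟩, hY⟩)
  · exact Or.inr ⟨⟨hX, u, huX, hvu⟩, hY, u, huY, hvu⟩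

lemma farSide_anti (h : Y ⊆ X) : farSide G X ⊆ farSide G Y :=
  fun _ ⟨hvX, hv⟩ => ⟨fun hvY => hvX (h hvY), fun ⟨_, u, hu, hvu⟩ => hv ⟨hvX, u, h hu, hvu⟩⟩

lemma isSeparation_farSide (hA : A.Nonempty) (hA' : (farSide G A).Nonempty) :
    IsSeparation G (gBoundary G A) A (farSide G A) where
  nonempty_left := hA
  nonempty_right := hA'
  disjoint := disjoint_left.mpr fun _ ha hb => hb.1 ha
  union_eq := by
    ext v
    by_cases hv : v ∈ A
    · simp [farSide, gBoundary, hv]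
    · simp [farSide, hv]
  not_adj a ha b hb hab := hb.2 ⟨hb.1, a, ha, hab.symm⟩

lemma IsFragment.isSeparation (hA : IsFragment G A) :
    IsSeparation G (gBoundary G A) A (farSide G A) :=
  isSeparation_farSide hA.1 hA.2.1

namespace IsSeparation

lemma symm (h : IsSeparation G S B B') : IsSeparation G S B' B where
  nonempty_left := h.nonempty_right
  nonempty_right := h.nonempty_left
  disjoint := h.disjoint.symm
  union_eq := by rw [union_comm, h.union_eq]
  not_adj a ha b hb hab := h.not_adj b hb a ha hab.symm

lemma separates (h : IsSeparation G S B B') : Separates G S :=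
  ⟨B, B', h.nonempty_left, h.nonempty_right, h.disjoint, h.union_eq, h.not_adj⟩

lemma disjoint_sep (h : IsSeparation G S B B') : Disjoint B S := by
  have hB : B ⊆ Sᶜ := h.union_eq ▸ subset_union_left
  exact disjoint_compl_left.mono_left hB

lemma gBoundary_subset (h : IsSeparation G S B B') : gBoundary G B ⊆ S := by
  rintro v ⟨hvB, u, hu, hvu⟩
  by_contra hvS
  rcases (h.union_eq ▸ hvS : v ∈ B ∪ B') with hv | hv
  · exact hvB hv
  · exact h.not_adj u hu v hv hvu.symm

lemma subset_farSide (h : IsSeparation G S B B') : B' ⊆ farSide G B :=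
  fun _ hb => ⟨disjoint_right.mp h.disjoint hb,
    fun hbS => disjoint_left.mp h.symm.disjoint_sep hb (h.gBoundary_subset hbS)⟩

lemma subset_farSide_inter (hX : IsSeparation G T X X') (Y : Set V) :
    X' ⊆ farSide G (X ∩ Y) :=
  hX.subset_farSide.trans (farSide_anti inter_subset_left)

lemma ncard_eq [Finite V] (h : IsSeparation G S B B') (X : Set V) :
    X.ncard = (B ∩ X).ncard + (S ∩ X).ncard + (B' ∩ X).ncard := by
  have hsplit : X \ S = (B ∩ X) ∪ (B' ∩ X) := by
    rw [sdiff_eq, ← h.union_eq, inter_comm, union_inter_distrib_right]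
  rw [← ncard_inter_add_ncard_sdiff_eq_ncard X S, hsplit,
    ncard_union_eq (h.disjoint.mono inter_subset_left inter_subset_left), inter_comm X S]
  ring

lemma ncard_eq' [Finite V] (h : IsSeparation G S B B') (X : Set V) :
    X.ncard = (X ∩ B).ncard + (X ∩ S).ncard + (X ∩ B').ncard := by
  rw [h.ncard_eq X, inter_comm B, inter_comm S, inter_comm B']

lemma gBoundary_inter_subset (hX : IsSeparation G T X X') (hY : IsSeparation G S Y Y') :
    gBoundary G (X ∩ Y) ⊆ (X ∩ S) ∪ (T ∩ Y) ∪ (T ∩ S) :=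
  (_root_.gBoundary_inter_subset X Y).trans <|
    union_subset_union (union_subset_union
      (inter_subset_inter_right _ hY.gBoundary_subset)
      (inter_subset_inter_left _ hX.gBoundary_subset))
      (inter_subset_inter hX.gBoundary_subset hY.gBoundary_subset)

lemma ncard_corner [Finite V] (hX : IsSeparation G T X X') (hY : IsSeparation G S Y Y') :
    ((X ∩ S) ∪ (T ∩ Y) ∪ (T ∩ S)).ncard = (X ∩ S).ncard + (T ∩ Y).ncard + (T ∩ S).ncard := by
  have hXT := hX.disjoint_sep
  rw [ncard_union_eq, ncard_union_eq]
  · exact hXT.mono inter_subset_left inter_subset_left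
  · exact disjoint_union_left.mpr ⟨hXT.mono inter_subset_left inter_subset_left,
      hY.disjoint_sep.mono inter_subset_right inter_subset_right⟩

lemma not_adj_of_ncard_inter_le_one [Finite V] {u v : V} (sep : IsSeparation G S B B')
    (hB : (A ∩ B).ncard ≤ 1) (hB' : (A ∩ B').ncard ≤ 1) (hu : u ∈ A \ S) (hv : v ∈ A \ S) :
    ¬ G.Adj u v := by
  have hmem : ∀ {z}, z ∈ A \ S → z ∈ A ∩ B ∨ z ∈ A ∩ B' := fun hz => by
    rcases (by rw [sep.union_eq]; exact hz.2 : _ ∈ B ∪ B') with h | h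
    exacts [Or.inl ⟨hz.1, h⟩, Or.inr ⟨hz.1, h⟩]
  intro huv
  rcases hmem hu with hu' | hu' <;> rcases hmem hv with hv' | hv'
  · exact huv.ne ((ncard_le_one_iff).mp hB hu' hv')
  · exact sep.not_adj u hu'.2 v hv'.2 huv
  · exact sep.not_adj v hv'.2 u hu'.2 huv.symm
  · exact huv.ne ((ncard_le_one_iff).mp hB' hu' hv')

end IsSeparation

end Boundary

lemma IsNontrivialAtom.exists_adj [Finite V] {G : SimpleGraph V} {A : Set V}
    (hA : IsNontrivialAtom G A) (h3 : 3 ≤ A.ncard) : ∃ x ∈ A, ∃ y ∈ A, G.Adj x y := by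
  by_contra! hind
  obtain ⟨a, ha⟩ := hA.1.1.1
  have hbd : gBoundary G (A \ {a}) ⊆ gBoundary G A :=
    fun v ⟨_, u, hu, hvu⟩ => ⟨fun hvA => hind v hvA u hu.1 hvu, u, hu.1, hvu⟩
  have hfar : farSide G A ⊆ farSide G (A \ {a}) := farSide_anti sdiff_subset
  have hcard : (A \ {a}).ncard = A.ncard - 1 := ncard_sdiff_singleton_of_mem ha
  have hfrag : IsNontrivialFragment G (A \ {a}) :=
    ⟨⟨nonempty_of_ncard_ne_zero (by omega), hA.1.1.2.1.mono hfar,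
      fun S hS => (ncard_le_ncard hbd).trans (hA.1.1.2.2 S hS)⟩,
      by omega, hA.1.2.2.trans (ncard_le_ncard hfar)⟩
  have := hA.2 _ hfrag
  omega

section Connectivity

variable [Fintype V] {G : SimpleGraph V} {k : ℕ} {A X X' Y Y' S T B B' : Set V}

lemma IsKConnected.le_ncard_of_separates (h : IsKConnected k G) (hS : Separates G S) :
    k ≤ S.ncard := by
  by_contra! hlt
  obtain ⟨B, B', ⟨b, hb⟩, ⟨b', hb'⟩, hdisj, hunion, hno⟩ := hS
  have hmem : ∀ {v}, v ∈ B ∪ B' → v ∈ Sᶜ := fun hv => hunion ▸ hv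
  obtain ⟨p⟩ := (h.2 S hlt).preconnected ⟨b, hmem (Or.inl hb)⟩ ⟨b', hmem (Or.inr hb')⟩
  obtain ⟨d, -, hd, hd'⟩ :=
    p.exists_boundary_dart {v | v.1 ∈ B} hb (disjoint_right.mp hdisj hb')
  have hsnd : d.snd.1 ∈ B ∪ B' := by rw [hunion]; exact d.snd.2
  exact hno _ hd _ (hsnd.resolve_left hd') d.adj

lemma IsKConnected.le_ncard_gBoundary (h : IsKConnected k G) (hX : X.Nonempty)
    (hfar : (farSide G X).Nonempty) : k ≤ (gBoundary G X).ncard :=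
  h.le_ncard_of_separates (isSeparation_farSide hX hfar).separates

lemma IsSeparation.isFragment (hsep : IsSeparation G S B B') (h : IsKConnected k G)
    (hS : S.ncard ≤ k) : IsFragment G B :=
  ⟨hsep.nonempty_left, hsep.nonempty_right.mono hsep.subset_farSide,
    fun _ hT =>
      (ncard_le_ncard hsep.gBoundary_subset).trans (hS.trans (h.le_ncard_of_separates hT))⟩

lemma IsSeparation.isNontrivialFragment (hsep : IsSeparation G S B B') (h : IsKConnected k G)
    (hS : S.ncard ≤ k) (hB : 2 ≤ B.ncard) (hB' : 2 ≤ B'.ncard) : IsNontrivialFragment G B :=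
  ⟨hsep.isFragment h hS, hB, hB'.trans (ncard_le_ncard hsep.subset_farSide)⟩

lemma IsKConnected.le_ncard_corner (h : IsKConnected k G) (hX : IsSeparation G T X X')
    (hY : IsSeparation G S Y Y') (hXY : (X ∩ Y).Nonempty) :
    k ≤ (X ∩ S).ncard + (T ∩ Y).ncard + (T ∩ S).ncard := by
  rw [← hX.ncard_corner hY]
  exact (h.le_ncard_gBoundary hXY (hX.nonempty_right.mono (hX.subset_farSide_inter Y))).trans
    (ncard_le_ncard (hX.gBoundary_inter_subset hY))

lemma IsNontrivialAtom.ncard_le_ncard_inter (hA : IsNontrivialAtom G A) (h : IsKConnected k G)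
    (hsA : IsSeparation G T A A') (hA' : 2 ≤ A'.ncard) (hY : IsSeparation G S Y Y')
    (h2 : 2 ≤ (A ∩ Y).ncard) (hL : (A ∩ S).ncard + (T ∩ Y).ncard + (T ∩ S).ncard ≤ k) :
    A.ncard ≤ (A ∩ Y).ncard := by
  have hfar := hsA.subset_farSide_inter Y
  have hsep := isSeparation_farSide (nonempty_of_ncard_ne_zero (by omega))
    (hsA.nonempty_right.mono hfar)
  refine hA.2 _ (hsep.isNontrivialFragment h ?_ h2 (hA'.trans (ncard_le_ncard hfar)))
  exact (ncard_le_ncard (hsA.gBoundary_inter_subset hY)).trans ((hsA.ncard_corner hY).trans_le hL)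

end Connectivity

section Crossing

variable [Fintype V] {G : SimpleGraph V} {A S B B' : Set V}

lemma IsNontrivialAtom.cell_counts (hA : IsNontrivialAtom G A) (h5 : IsKConnected 5 G)
    (hA4 : 4 ≤ A.ncard) (sep : IsSeparation G S B B')
    (hS : S.ncard = 5) (hB : A.ncard ≤ B.ncard) (hB' : A.ncard ≤ B'.ncard)
    (hAS : (A ∩ S).Nonempty) :
    (A ∩ S).ncard = 2 ∧ (A ∩ B).ncard = 1 ∧
      (A ∩ S).ncard + (gBoundary G A ∩ B).ncard + (gBoundary G A ∩ S).ncard = 5 := by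
  set T := gBoundary G A
  set A' := farSide G A
  have sA : IsSeparation G T A A' := hA.1.1.isSeparation
  have hT : T.ncard = 5 :=
    le_antisymm (hS ▸ hA.1.1.2.2 S sep.separates) (h5.le_ncard_gBoundary hA.1.1.1 hA.1.1.2.1)
  have hA' : 2 ≤ A'.ncard := hA.1.2.2
  have hAS' : (A ∩ S).ncard ≠ 0 := hAS.ncard_pos.ne'
  have eA := sep.ncard_eq' A
  have eT := sep.ncard_eq' T
  have eS := sA.ncard_eq S
  have eB := sA.ncard_eq B
  have eB' := sA.ncard_eq B'
  -- A nonempty corner is cut off by its three bordering cells, and a corner of `A` with two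
  -- vertices is not a smaller nontrivial fragment.
  have hAB : (A ∩ B).ncard ≠ 0 → 5 ≤ (A ∩ S).ncard + (T ∩ B).ncard + (T ∩ S).ncard :=
    fun h => h5.le_ncard_corner sA sep (nonempty_of_ncard_ne_zero h)
  have hAB' : (A ∩ B').ncard ≠ 0 → 5 ≤ (A ∩ S).ncard + (T ∩ B').ncard + (T ∩ S).ncard :=
    fun h => h5.le_ncard_corner sA sep.symm (nonempty_of_ncard_ne_zero h)
  have hA'B : (A' ∩ B).ncard ≠ 0 → 5 ≤ (A' ∩ S).ncard + (T ∩ B).ncard + (T ∩ S).ncard :=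
    fun h => h5.le_ncard_corner sA.symm sep (nonempty_of_ncard_ne_zero h)
  have hA'B' : (A' ∩ B').ncard ≠ 0 → 5 ≤ (A' ∩ S).ncard + (T ∩ B').ncard + (T ∩ S).ncard :=
    fun h => h5.le_ncard_corner sA.symm sep.symm (nonempty_of_ncard_ne_zero h)
  have hminB : 2 ≤ (A ∩ B).ncard → (A ∩ S).ncard + (T ∩ B).ncard + (T ∩ S).ncard ≤ 5 →
      A.ncard ≤ (A ∩ B).ncard :=
    hA.ncard_le_ncard_inter h5 sA hA' sep
  have hminB' : 2 ≤ (A ∩ B').ncard → (A ∩ S).ncard + (T ∩ B').ncard + (T ∩ S).ncard ≤ 5 →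
      A.ncard ≤ (A ∩ B').ncard :=
    hA.ncard_le_ncard_inter h5 sA hA' sep.symm
  omega

lemma IsNontrivialAtom.adj_of_mem_inter (hA : IsNontrivialAtom G A) (h5 : IsKConnected 5 G)
    (hA4 : 4 ≤ A.ncard) (sep : IsSeparation G S B B')
    (hS : S.ncard = 5) (hB : A.ncard ≤ B.ncard) (hB' : A.ncard ≤ B'.ncard) {u w : V}
    (hu : u ∈ A ∩ S) (hw : w ∈ A ∩ B) : G.Adj u w := by
  obtain ⟨-, hAB, hL⟩ := hA.cell_counts h5 hA4 sep hS hB hB' ⟨u, hu⟩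
  have sA := hA.1.1.isSeparation
  have hsub := sA.gBoundary_inter_subset sep
  have hge := h5.le_ncard_gBoundary ⟨w, hw⟩ (sA.nonempty_right.mono (sA.subset_farSide_inter B))
  have heq := eq_of_subset_of_ncard_le hsub (by rw [sA.ncard_corner sep, hL]; exact hge)
  have hu' : u ∈ gBoundary G (A ∩ B) := heq ▸ Or.inl (Or.inl hu)
  obtain ⟨-, a, ha, hua⟩ := hu'
  rwa [(ncard_le_one_iff).mp hAB.le ha hw] at hua

end Crossing

section Contraction

variable [DecidableEq V] {G : SimpleGraph V} {x y : V}

lemma contractE_adj_of_adj {a b : {v : V // v ≠ y}} (h : G.Adj a b) :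
    (contractE G x y).Adj a b := by
  rw [contractE, fromRel_adj]
  exact ⟨fun hab => h.ne (congrArg Subtype.val hab), Or.inl (Or.inl h)⟩

lemma contractE_adj_of_adj_right (hxy : x ≠ y) {b : {v : V // v ≠ y}} (hb : ⟨x, hxy⟩ ≠ b)
    (h : G.Adj y b) : (contractE G x y).Adj ⟨x, hxy⟩ b := by
  rw [contractE, fromRel_adj]
  exact ⟨hb, Or.inl (Or.inr (Or.inl ⟨rfl, h⟩))⟩

lemma IsKConnected.contractE [Fintype V] {k : ℕ} (h : IsKConnected (k + 1) G) (x y : V) :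
    IsKConnected k (_root_.contractE G x y) := by
  refine ⟨?_, fun S' hS' => ?_⟩
  · have := h.1
    rw [Fintype.card_subtype_compl, Fintype.card_subtype_eq]
    omega
  · set S := insert y (Subtype.val '' S')
    have hS : S.ncard < k + 1 := (ncard_insert_le _ _).trans_lt (by
      rw [ncard_image_of_injective _ Subtype.val_injective]; omega)
    have hy : ∀ v : ↥Sᶜ, v.1 ≠ y := fun v hv => v.2 (hv ▸ mem_insert _ _)
    let f : G.induce Sᶜ →g (_root_.contractE G x y).induce S'ᶜ :=
      { toFun v := ⟨⟨v, hy v⟩, fun hv => v.2 (mem_insert_of_mem _ ⟨_, hv, rfl⟩)⟩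
        map_rel' hab := contractE_adj_of_adj hab }
    refine (h.2 S hS).map f ?_
    rintro ⟨⟨v, hvy⟩, hvS'⟩
    refine ⟨⟨v, ?_⟩, rfl⟩
    rintro (rfl | ⟨w, hw, rfl⟩)
    · exact hvy rfl
    · exact hvS' hw

lemma val_image_compl (W : Set {v : V // v ≠ y}) :
    Subtype.val '' Wᶜ = (insert y (Subtype.val '' W))ᶜ := by
  ext v
  by_cases hv : v = y
  · subst hv
    simp
  · simp [hv]

lemma insert_val_image_compl (W : Set {v : V // v ≠ y}) :
    insert y (Subtype.val '' Wᶜ) = (Subtype.val '' W)ᶜ := by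
  ext v
  by_cases hv : v = y
  · subst hv
    simp
  · simp [hv]

variable {T' P Q : Set {v : V // v ≠ y}}

lemma IsSeparation.of_contractE (sep : IsSeparation (contractE G x y) T' P Q) :
    IsSeparation G (insert y (Subtype.val '' T')) (Subtype.val '' P) (Subtype.val '' Q) where
  nonempty_left := sep.nonempty_left.image _
  nonempty_right := sep.nonempty_right.image _
  disjoint := (disjoint_image_iff Subtype.val_injective).mpr sep.disjoint
  union_eq := by rw [← image_union, sep.union_eq, val_image_compl]
  not_adj := by
    rintro _ ⟨a, ha, rfl⟩ _ ⟨b, hb, rfl⟩ hab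
    exact sep.not_adj a ha b hb (contractE_adj_of_adj hab)

lemma IsSeparation.of_contractE_of_mem_left (hxy : x ≠ y)
    (sep : IsSeparation (contractE G x y) T' P Q) (hx : ⟨x, hxy⟩ ∈ P) :
    IsSeparation G (Subtype.val '' T') (insert y (Subtype.val '' P)) (Subtype.val '' Q) where
  nonempty_left := insert_nonempty _ _
  nonempty_right := sep.nonempty_right.image _
  disjoint := by
    refine disjoint_insert_left.mpr ⟨fun ⟨w, _, hw⟩ => w.2 hw, ?_⟩
    exact (disjoint_image_iff Subtype.val_injective).mpr sep.disjoint
  union_eq := by rw [insert_union, ← image_union, sep.union_eq, insert_val_image_compl]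
  not_adj := by
    rintro _ (rfl | ⟨a, ha, rfl⟩) _ ⟨b, hb, rfl⟩ hab
    · exact sep.not_adj _ hx b hb
        (contractE_adj_of_adj_right hxy (fun h => disjoint_left.mp sep.disjoint hx (h ▸ hb)) hab)
    · exact sep.not_adj a ha b hb (contractE_adj_of_adj hab)

end Contraction

section Critical

variable [Fintype V] [DecidableEq V] {G : SimpleGraph V} {A : Set V} {x y : V}

lemma exists_isSeparation_of_adj (h5 : IsKConnected 5 G) (hcc : ContractionCriticalQuasiFive G)
    (hxy : G.Adj x y) : ∃ S B B', S.ncard = 5 ∧ x ∈ S ∧ y ∈ S ∧ IsSeparation G S B B' ∧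
      2 ≤ B.ncard ∧ 2 ≤ B'.ncard := by
  obtain ⟨T', hT', P, Q, hP, hQ, hdisj, hunion, hno⟩ :
      ∃ T', IsNontrivialFourCut (contractE G x y) T' := by
    by_contra! hnone
    exact hcc.2 x y hxy ⟨h5.contractE x y, hnone⟩
  have sep : IsSeparation (contractE G x y) T' P Q :=
    ⟨nonempty_of_ncard_ne_zero (by omega), nonempty_of_ncard_ne_zero (by omega), hdisj, hunion,
      hno⟩
  have hval : ∀ W : Set {v : V // v ≠ y}, (Subtype.val '' W).ncard = W.ncard :=
    fun W => ncard_image_of_injective W Subtype.val_injective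
  -- otherwise the cut `T'` of the contraction would lift to a 4-separator of `G`
  have hx : ⟨x, hxy.ne⟩ ∈ T' := by
    by_contra hx
    obtain ⟨B, B', hsep⟩ : ∃ B B', IsSeparation G (Subtype.val '' T') B B' := by
      rcases (by rw [hunion]; exact hx : _ ∈ P ∪ Q) with hxP | hxQ
      exacts [⟨_, _, sep.of_contractE_of_mem_left hxy.ne hxP⟩,
        ⟨_, _, sep.symm.of_contractE_of_mem_left hxy.ne hxQ⟩]
    have := h5.le_ncard_of_separates hsep.separates
    rw [hval] at this
    omega
  have hy : y ∉ Subtype.val '' T' := fun ⟨w, _, hw⟩ => w.2 hw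
  refine ⟨_, _, _, ?_, mem_insert_of_mem _ (mem_image_of_mem _ hx), mem_insert _ _,
    sep.of_contractE, by rwa [hval], by rwa [hval]⟩
  rw [ncard_insert_of_notMem hy, hval, hT']

lemma IsNontrivialAtom.exists_isSeparation_of_adj (hA : IsNontrivialAtom G A)
    (h5 : IsKConnected 5 G) (hcc : ContractionCriticalQuasiFive G) (hA4 : 4 ≤ A.ncard)
    (hxA : x ∈ A) (hyA : y ∈ A) (hxy : G.Adj x y) :
    ∃ S B B', IsSeparation G S B B' ∧ A ∩ S = {x, y} ∧ (A ∩ B).ncard = 1 ∧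
      (A ∩ B').ncard = 1 ∧ ∀ u ∈ A ∩ S, ∀ w ∈ A \ S, G.Adj u w := by
  obtain ⟨S, B, B', hS, hxS, hyS, sep, hB2, hB'2⟩ := _root_.exists_isSeparation_of_adj h5 hcc hxy
  have hB := hA.2 B (sep.isNontrivialFragment h5 hS.le hB2 hB'2)
  have hB' := hA.2 B' (sep.symm.isNontrivialFragment h5 hS.le hB'2 hB2)
  obtain ⟨hAS, hAB, -⟩ := hA.cell_counts h5 hA4 sep hS hB hB' ⟨x, hxA, hxS⟩
  obtain ⟨-, hAB', -⟩ := hA.cell_counts h5 hA4 sep.symm hS hB' hB ⟨x, hxA, hxS⟩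
  refine ⟨S, B, B', sep, ?_, hAB, hAB', fun u hu w hw => ?_⟩
  · refine (eq_of_subset_of_ncard_le (pair_subset (s := A ∩ S) ⟨hxA, hxS⟩ ⟨hyA, hyS⟩) ?_).symm
    rw [hAS, ncard_pair hxy.ne]
  rcases (by rw [sep.union_eq]; exact hw.2 : w ∈ B ∪ B') with hwB | hwB'
  · exact hA.adj_of_mem_inter h5 hA4 sep hS hB hB' hu ⟨hw.1, hwB⟩
  · exact hA.adj_of_mem_inter h5 hA4 sep.symm hS hB' hB hu ⟨hw.1, hwB'⟩

end Critical

/-- A nontrivial atom of a 5-connected, contraction critical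
quasi 5-connected graph has at most 3 vertices. -/
theorem stmt8 {V : Type*} [Fintype V] [DecidableEq V] (G : SimpleGraph V)
    (h5 : IsKConnected 5 G) (hcc : ContractionCriticalQuasiFive G)
    (A : Set V) (hA : IsNontrivialFragment G A)
    (hatom : ∀ B : Set V, IsNontrivialFragment G B → A.ncard ≤ B.ncard) :
    A.ncard ≤ 3 := by
  have hA' : IsNontrivialAtom G A := ⟨hA, hatom⟩
  by_contra! hA4
  obtain ⟨x, hxA, y, hyA, hxy⟩ := hA'.exists_adj (by omega)
  obtain ⟨S, B, B', sep, hS, hAB, hAB', hadj⟩ :=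
    hA'.exists_isSeparation_of_adj h5 hcc hA4 hxA hyA hxy
  have hxS : x ∈ S := (hS.symm.subset (mem_insert x _)).2
  have hyS : y ∈ S := (hS.symm.subset (mem_insert_of_mem x rfl)).2
  obtain ⟨w, hwA, hwB⟩ := nonempty_of_ncard_ne_zero (hAB ▸ one_ne_zero)
  obtain ⟨w', hw'A, hw'B'⟩ := nonempty_of_ncard_ne_zero (hAB' ▸ one_ne_zero)
  have hwS : w ∉ S := disjoint_left.mp sep.disjoint_sep hwB
  have hw'S : w' ∉ S := disjoint_left.mp sep.symm.disjoint_sep hw'B'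
  have hxw := hadj x ⟨hxA, hxS⟩ w ⟨hwA, hwS⟩
  obtain ⟨S₂, C, C', sep₂, hS₂, hAC, hAC', -⟩ :=
    hA'.exists_isSeparation_of_adj h5 hcc hA4 hxA hwA hxw
  have hyS₂ : y ∉ S₂ := fun hy => by
    rcases hS₂.subset ⟨hyA, hy⟩ with rfl | rfl
    exacts [hxy.ne rfl, hwS hyS]
  have hw'S₂ : w' ∉ S₂ := fun hw' => by
    rcases hS₂.subset ⟨hw'A, hw'⟩ with rfl | rfl
    exacts [hw'S hxS, disjoint_left.mp sep.disjoint hwB hw'B']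
  exact sep₂.not_adj_of_ncard_inter_le_one hAC.le hAC'.le ⟨hyA, hyS₂⟩ ⟨hw'A, hw'S₂⟩
    (hadj y ⟨hyA, hyS⟩ w' ⟨hw'A, hw'S⟩)
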